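/- Suppose T is an invertible linear operator on finite-dimensional spaces that satisfies the lower bounds ‖T f‖_{p_2} ≥ M_p ‖f‖_{p_1} and ‖T f‖_{q_2} ≥ M_q ‖f‖_{q_1} for all f, with a bounded left inverse. Then for any t ∈ [0,1], ‖T f‖_{r_2} ≥ M_p^t M_q^{1-t} ‖f‖_{r_1}, where 1/r_1 = t/p_1 + (1-t)/q_1 and 1/r_2 = t/p_2 + (1-t)/q_2. -/

import Mathlib

open Finset ENNReal

noncomputable def lpnormE {ι : Type*} [Fintype ι] (p : ℝ≥0∞) (f : ι → ℂ) : ℝ :=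
  if p = ⊤ then ⨆ i, ‖f i‖
  else (∑ i, ‖f i‖ ^ p.toReal) ^ (1 / p.toReal)

namespace RTaux

variable {ι : Type*} [Fintype ι]

lemma lpnormE_nonneg (p : ℝ≥0∞) (f : ι → ℂ) : 0 ≤ lpnormE p f := by
  unfold lpnormE
  split
  · exact Real.iSup_nonneg fun i => (norm_nonneg _)
  · exact Real.rpow_nonneg (Finset.sum_nonneg fun i _ => Real.rpow_nonneg (norm_nonneg _) _) _

lemma toReal_pos_of_ne_top {p : ℝ≥0∞} (hp : 1 ≤ p) (h : p ≠ ⊤) : 0 < p.toReal := by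
  have := ENNReal.toReal_mono h hp
  simpa using lt_of_lt_of_le one_pos (by simpa using this)

lemma one_le_toReal {p : ℝ≥0∞} (hp : 1 ≤ p) (h : p ≠ ⊤) : 1 ≤ p.toReal := by
  have := ENNReal.toReal_mono h hp
  simpa using this

lemma lpnormE_eq_sum {p : ℝ≥0∞} (h : p ≠ ⊤) (f : ι → ℂ) :
    lpnormE p f = (∑ i, ‖f i‖ ^ p.toReal) ^ (1 / p.toReal) := by
  simp [lpnormE, h]

lemma lpnormE_top (f : ι → ℂ) : lpnormE ⊤ f = ⨆ i, ‖f i‖ := by simp [lpnormE]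

lemma lpnormE_one (f : ι → ℂ) : lpnormE 1 f = ∑ i, ‖f i‖ := by
  simp [lpnormE]

lemma abs_le_lpnormE_top (f : ι → ℂ) (i : ι) : ‖f i‖ ≤ lpnormE ⊤ f := by
  rw [lpnormE_top]
  exact le_ciSup (f := fun i => ‖f i‖) (Set.Finite.bddAbove (Set.finite_range _)) i

lemma lpnormE_top_le {f : ι → ℂ} {a : ℝ} (ha : 0 ≤ a) (h : ∀ i, ‖f i‖ ≤ a) :
    lpnormE ⊤ f ≤ a := by
  rw [lpnormE_top]; exact Real.iSup_le h ha

lemma sum_rpow_eq {p : ℝ≥0∞} (hp : 1 ≤ p) (h : p ≠ ⊤) (f : ι → ℂ) :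
    ∑ i, ‖f i‖ ^ p.toReal = (lpnormE p f) ^ p.toReal := by
  rw [lpnormE_eq_sum h,
    ← Real.rpow_mul (Finset.sum_nonneg fun i _ => Real.rpow_nonneg (norm_nonneg _) _),
    one_div, inv_mul_cancel₀ (toReal_pos_of_ne_top hp h).ne', Real.rpow_one]

lemma lpnormE_pos {p : ℝ≥0∞} (hp : 1 ≤ p) {f : ι → ℂ} (hf : f ≠ 0) : 0 < lpnormE p f := by
  obtain ⟨i, hi⟩ : ∃ i, f i ≠ 0 := by
    by_contra h
    push_neg at h
    exact hf (funext h)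
  by_cases h : p = ⊤
  · subst h
    exact lt_of_lt_of_le (by simpa using hi) (abs_le_lpnormE_top f i)
  · rw [lpnormE_eq_sum h]
    apply Real.rpow_pos_of_pos
    have h1 : 0 < ‖f i‖ ^ p.toReal :=
      Real.rpow_pos_of_pos (by simpa using hi) _
    refine lt_of_lt_of_le h1 (Finset.single_le_sum (fun j _ => Real.rpow_nonneg (norm_nonneg _) _) (mem_univ i))

lemma lpnormE_zero {p : ℝ≥0∞} (hp : 1 ≤ p) : lpnormE p (0 : ι → ℂ) = 0 := by
  by_cases h : p = ⊤
  · subst h; rw [lpnormE_top]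
    exact le_antisymm (Real.iSup_le (fun i => by simp) le_rfl) (Real.iSup_nonneg fun i => by simp)
  · rw [lpnormE_eq_sum h]
    have := toReal_pos_of_ne_top hp h
    rw [Finset.sum_congr rfl (fun i _ => by simp [Real.zero_rpow this.ne'] : ∀ i ∈ univ, ‖(0:ι → ℂ) i‖ ^ p.toReal = 0)]
    rw [Finset.sum_const_zero, Real.zero_rpow (by positivity : (1/p.toReal) ≠ 0)]

lemma lpnormE_smul {p : ℝ≥0∞} (hp : 1 ≤ p) (c : ℂ) (f : ι → ℂ) :
    lpnormE p (c • f) = ‖c‖ * lpnormE p f := by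
  by_cases h : p = ⊤
  · subst h
    rw [lpnormE_top, lpnormE_top, Real.mul_iSup_of_nonneg (norm_nonneg c)]
    simp [norm_mul]
  · rw [lpnormE_eq_sum h, lpnormE_eq_sum h]
    have he := toReal_pos_of_ne_top hp h
    have : ∀ i ∈ univ, ‖(c • f) i‖ ^ p.toReal
        = ‖c‖ ^ p.toReal * ‖f i‖ ^ p.toReal := by
      intro i _
      simp [norm_mul, Real.mul_rpow (norm_nonneg _) (norm_nonneg _)]
    rw [Finset.sum_congr rfl this, ← Finset.mul_sum,
      Real.mul_rpow (Real.rpow_nonneg (norm_nonneg _) _)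
        (Finset.sum_nonneg fun i _ => Real.rpow_nonneg (norm_nonneg _) _),
      ← Real.rpow_mul (norm_nonneg _), mul_one_div, div_self he.ne', Real.rpow_one]

end RTaux

namespace RTaux
variable {ι : Type*} [Fintype ι]

/-- conjugate exponent -/
noncomputable def dualExp (p : ℝ≥0∞) : ℝ≥0∞ := (1 - 1/p)⁻¹

lemma one_div_dualExp (p : ℝ≥0∞) : 1 / dualExp p = 1 - 1/p := by
  simp [dualExp, one_div]

lemma one_le_dualExp (p : ℝ≥0∞) : 1 ≤ dualExp p := by
  rw [← ENNReal.inv_le_one, dualExp, inv_inv]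
  exact tsub_le_self.trans le_rfl

lemma inv_add_inv_dualExp {p : ℝ≥0∞} (hp : 1 ≤ p) : 1/p + 1/(dualExp p) = 1 := by
  rw [one_div_dualExp]
  have h : 1/p ≤ 1 := by
    rw [one_div, ENNReal.inv_le_one]; exact hp
  exact add_tsub_cancel_of_le h

lemma dualExp_top : dualExp ⊤ = 1 := by simp [dualExp]

lemma dualExp_one : dualExp 1 = ⊤ := by simp [dualExp]

lemma dualExp_eq_top_iff {p : ℝ≥0∞} (hp : 1 ≤ p) : dualExp p = ⊤ ↔ p = 1 := by
  constructor
  · intro h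
    rw [dualExp, ENNReal.inv_eq_top, tsub_eq_zero_iff_le, one_div, ENNReal.one_le_inv] at h
    exact le_antisymm h hp
  · intro h; subst h; exact dualExp_one

/-- Hölder inequality for lpnormE. -/
lemma holder {p q : ℝ≥0∞} (hp : 1 ≤ p) (hq : 1 ≤ q) (hpq : 1/p + 1/q = 1)
    (u w : ι → ℂ) :
    ∑ i, ‖u i‖ * ‖w i‖ ≤ lpnormE p u * lpnormE q w := by
  by_cases hptop : p = ⊤
  · subst hptop
    have hq1 : q = 1 := by
      rw [one_div, ENNReal.inv_top, zero_add, one_div, ENNReal.inv_eq_one] at hpq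
      exact hpq
    subst hq1
    rw [lpnormE_one]
    calc ∑ i, ‖u i‖ * ‖w i‖
        ≤ ∑ i, lpnormE ⊤ u * ‖w i‖ :=
          Finset.sum_le_sum fun i _ => mul_le_mul_of_nonneg_right (abs_le_lpnormE_top u i) (norm_nonneg _)
      _ = lpnormE ⊤ u * ∑ i, ‖w i‖ := by rw [← Finset.mul_sum]
  · by_cases hqtop : q = ⊤
    · subst hqtop
      have hp1 : p = 1 := by
        rw [one_div (⊤:ℝ≥0∞), ENNReal.inv_top, add_zero, one_div, ENNReal.inv_eq_one] at hpq
        exact hpq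
      subst hp1
      rw [lpnormE_one]
      calc ∑ i, ‖u i‖ * ‖w i‖
          ≤ ∑ i, ‖u i‖ * lpnormE ⊤ w :=
            Finset.sum_le_sum fun i _ => mul_le_mul_of_nonneg_left (abs_le_lpnormE_top w i) (norm_nonneg _)
        _ = (∑ i, ‖u i‖) * lpnormE ⊤ w := by rw [← Finset.sum_mul]
    · -- both finite
      have hp1 : 1 < p := by
        rcases lt_or_eq_of_le hp with h | h
        · exact h
        · exfalso
          rw [← h] at hpq
          have h2 : (1:ℝ≥0∞) + 1/q = 1 + 0 := by simpa using hpq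
          have := (ENNReal.add_right_inj (by simp)).mp h2
          rw [one_div, ENNReal.inv_eq_zero] at this
          exact hqtop this
      have hq1 : 1 < q := by
        rcases lt_or_eq_of_le hq with h | h
        · exact h
        · exfalso
          rw [← h] at hpq
          have h2 : (1:ℝ≥0∞) + 1/p = 1 + 0 := by
            rw [add_comm] at hpq; simpa using hpq
          have := (ENNReal.add_right_inj (by simp)).mp h2
          rw [one_div, ENNReal.inv_eq_zero] at this
          exact hptop this
      have hconj : p.toReal.HolderConjugate q.toReal := by
        rw [Real.holderConjugate_iff]
        constructor
        · have h2 : (1:ℝ≥0∞).toReal < p.toReal := ENNReal.toReal_strict_mono hptop hp1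
          simpa using h2
        · have h1 : (1/p).toReal + (1/q).toReal = 1 := by
            rw [← ENNReal.toReal_add, hpq] <;>
              simp [one_div, ENNReal.inv_ne_top]
            · exact (lt_of_lt_of_le zero_lt_one hp).ne'
            · exact (lt_of_lt_of_le zero_lt_one hq).ne'
          rw [ENNReal.toReal_div, ENNReal.toReal_div, ENNReal.toReal_one] at h1
          simpa [one_div] using h1
      rw [lpnormE_eq_sum hptop, lpnormE_eq_sum hqtop]
      exact Real.inner_le_Lp_mul_Lq_of_nonneg univ hconj
        (fun i _ => norm_nonneg _) (fun i _ => norm_nonneg _)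

end RTaux

namespace RTaux
variable {ι : Type*} [Fintype ι]

lemma mul_conj_div_abs {v : ℂ} (hv : v ≠ 0) :
    v * ((starRingEnd ℂ) v / (‖v‖ : ℂ)) = (‖v‖ : ℂ) := by
  have ha : (‖v‖ : ℂ) ≠ 0 := Complex.ofReal_ne_zero.mpr (norm_ne_zero_iff.mpr hv)
  rw [mul_div_assoc', Complex.mul_conj, Complex.normSq_eq_norm_sq]
  push_cast
  rw [sq, mul_div_assoc, div_self ha, mul_one]

lemma abs_conj_div_abs {v : ℂ} (hv : v ≠ 0) :
    ‖(starRingEnd ℂ) v / (‖v‖ : ℂ)‖ = 1 := by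
  rw [norm_div, Complex.norm_conj, Complex.norm_real, Real.norm_eq_abs, abs_of_nonneg (norm_nonneg v),
    div_self (norm_ne_zero_iff.mpr hv)]

lemma exists_dual {p : ℝ≥0∞} (hp : 1 ≤ p) (v : ι → ℂ) (hv : v ≠ 0) :
    ∃ h : ι → ℂ, lpnormE (dualExp p) h ≤ 1 ∧ ∑ i, v i * h i = ((lpnormE p v : ℝ) : ℂ) := by
  classical
  obtain ⟨i₁, hi₁⟩ : ∃ i, v i ≠ 0 := by
    by_contra hco; push_neg at hco; exact hv (funext hco)
  by_cases hptop : p = ⊤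
  · subst hptop
    obtain ⟨i₀, -, hmax⟩ := Finset.exists_max_image univ (fun i => ‖v i‖)
      ⟨i₁, mem_univ i₁⟩
    have hvi₀ : v i₀ ≠ 0 := by
      intro h0
      have := hmax i₁ (mem_univ i₁)
      rw [h0] at this
      simp only [map_zero, norm_zero] at this
      exact hi₁ (by simpa using le_antisymm this (norm_nonneg _))
    have hnorm : lpnormE ⊤ v = ‖v i₀‖ := by
      refine le_antisymm (lpnormE_top_le (norm_nonneg _) fun i => hmax i (mem_univ i)) ?_
      exact abs_le_lpnormE_top v i₀
    refine ⟨fun i => if i = i₀ then (starRingEnd ℂ) (v i₀) / (‖v i₀‖ : ℂ) else 0, ?_, ?_⟩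
    · rw [dualExp_top, lpnormE_one]
      rw [Finset.sum_eq_single i₀ (fun j _ hj => by simp [hj]) (by simp), if_pos rfl,
        abs_conj_div_abs hvi₀]
    · rw [Finset.sum_eq_single i₀ (fun j _ hj => by simp [hj]) (by simp)]
      show v i₀ * (if i₀ = i₀ then (starRingEnd ℂ) (v i₀) / (‖v i₀‖ : ℂ) else 0)
        = ((lpnormE ⊤ v : ℝ) : ℂ)
      rw [if_pos rfl, mul_conj_div_abs hvi₀, hnorm]
  · by_cases hp1 : p = 1
    · subst hp1
      refine ⟨fun i => if v i = 0 then 0 else (starRingEnd ℂ) (v i) / (‖v i‖ : ℂ), ?_, ?_⟩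
      · rw [dualExp_one]
        refine lpnormE_top_le zero_le_one fun i => ?_
        by_cases h0 : v i = 0
        · simp [h0]
        · simp only [if_neg h0]
          rw [abs_conj_div_abs h0]
      · rw [lpnormE_one]
        have hterm : ∀ i ∈ univ, (v i * if v i = 0 then 0 else
            (starRingEnd ℂ) (v i) / (‖v i‖ : ℂ)) = ((‖v i‖ : ℝ) : ℂ) := by
          intro i _
          by_cases h0 : v i = 0
          · simp [h0]
          · rw [if_neg h0, mul_conj_div_abs h0]
        rw [Finset.sum_congr rfl hterm]
        norm_cast
    · -- 1 < p < ∞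
      have hplt : 1 < p := lt_of_le_of_ne hp (Ne.symm hp1)
      set e := p.toReal with he
      have he1 : 1 < e := by
        have := ENNReal.toReal_strict_mono hptop hplt
        simpa using this
      have he0 : 0 < e := lt_trans one_pos he1
      set L := lpnormE p v with hL
      have hLpos : 0 < L := lpnormE_pos hp hv
      have hsum : ∑ i, ‖v i‖ ^ e = L ^ e := sum_rpow_eq hp hptop v
      -- dual exponent facts
      have hdual_ne_top : dualExp p ≠ ⊤ := by
        rw [Ne, dualExp_eq_top_iff hp]; exact hp1
      set e' := (dualExp p).toReal with he'
      have hco : 1/e + 1/e' = 1 := by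
        have h1 : (1/p).toReal + (1/(dualExp p)).toReal = 1 := by
          rw [← ENNReal.toReal_add, inv_add_inv_dualExp hp]
          · simp
          · rw [one_div]
            exact ENNReal.inv_ne_top.mpr (lt_of_lt_of_le zero_lt_one hp).ne'
          · rw [one_div]
            exact ENNReal.inv_ne_top.mpr (lt_of_lt_of_le zero_lt_one (one_le_dualExp p)).ne'
        rw [ENNReal.toReal_div, ENNReal.toReal_div, ENNReal.toReal_one] at h1
        exact h1
      have he'0 : 0 < e' := by
        have h1e : (0:ℝ) < 1/e' := by
          have h2 : 1/e < 1 := by rw [div_lt_one he0]; exact he1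
          linarith
        exact one_div_pos.mp h1e
      have hee' : (e - 1) * e' = e := by
        have hne : e' ≠ 0 := he'0.ne'
        have h2 : e' * (1/e + 1/e') = e' := by rw [hco, mul_one]
        rw [mul_add, mul_one_div, mul_one_div, div_self hne] at h2
        have h3 : e' / e = e' - 1 := by linarith
        have h4 : e' = e * (e' - 1) := by
          rw [← h3]; field_simp
        nlinarith [h4, he0, he'0]
      refine ⟨fun i => if v i = 0 then 0 else
        ((‖v i‖ ^ (e - 1) / L ^ (e-1) : ℝ) : ℂ) *
          ((starRingEnd ℂ) (v i) / (‖v i‖ : ℂ)), ?_, ?_⟩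
      · rw [lpnormE_eq_sum hdual_ne_top]
        have habs : ∀ i ∈ univ, ‖if v i = 0 then 0 else
            ((‖v i‖ ^ (e - 1) / L ^ (e-1) : ℝ) : ℂ) *
              ((starRingEnd ℂ) (v i) / (‖v i‖ : ℂ))‖ ^ e'
            = ‖v i‖ ^ e / L ^ e := by
          intro i _
          by_cases h0 : v i = 0
          · rw [if_pos h0]
            simp only [map_zero, norm_zero, h0]
            rw [Real.zero_rpow he'0.ne', Real.zero_rpow he0.ne', zero_div]
          · rw [if_neg h0, norm_mul, abs_conj_div_abs h0, mul_one, Complex.norm_real, Real.norm_eq_abs,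
              abs_of_nonneg (by positivity)]
            rw [Real.div_rpow (Real.rpow_nonneg (norm_nonneg _) _) (Real.rpow_nonneg hLpos.le _)]
            rw [← Real.rpow_mul (norm_nonneg _), ← Real.rpow_mul hLpos.le, hee']
        rw [Finset.sum_congr rfl habs, ← Finset.sum_div, hsum, div_self (by positivity)]
        rw [Real.one_rpow]
      · have hterm : ∀ i ∈ univ, v i * (if v i = 0 then 0 else
            ((‖v i‖ ^ (e - 1) / L ^ (e-1) : ℝ) : ℂ) *
              ((starRingEnd ℂ) (v i) / (‖v i‖ : ℂ)))
            = ((‖v i‖ ^ e / L ^ (e-1) : ℝ) : ℂ) := by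
          intro i _
          by_cases h0 : v i = 0
          · rw [if_pos h0, h0]
            simp only [zero_mul, map_zero, norm_zero]
            rw [Real.zero_rpow he0.ne', zero_div]
            simp
          · rw [if_neg h0, mul_comm (((‖v i‖ ^ (e - 1) / L ^ (e-1) : ℝ) : ℂ)) _,
              ← mul_assoc, mul_conj_div_abs h0]
            norm_cast
            have hxx : ‖v i‖ ^ e = ‖v i‖ * ‖v i‖ ^ (e - 1) := by
              rw [show e = 1 + (e - 1) by ring, Real.rpow_add (norm_pos_iff.mpr h0), Real.rpow_one]
              ring_nf
            rw [hxx]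
            ring
        rw [Finset.sum_congr rfl hterm, ← Complex.ofReal_sum]
        norm_cast
        rw [← Finset.sum_div, hsum, ← Real.rpow_sub hLpos,
          show e - (e - 1) = 1 by ring, Real.rpow_one]

end RTaux

namespace RTaux
variable {ι : Type*} [Fintype ι]

lemma exists_family (w : ι → ℂ) {P Pa Pb : ℝ≥0∞}
    (hP : 1 ≤ P) (hPa : 1 ≤ Pa) (hPb : 1 ≤ Pb)
    {t : ℝ} (ht0 : 0 < t) (ht1 : t < 1)
    (hint : (1/P).toReal = t * (1/Pa).toReal + (1-t) * (1/Pb).toReal)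
    (htop : P = ⊤ → Pa = ⊤ ∧ Pb = ⊤)
    (hw : lpnormE P w ≤ 1) :
    ∃ W : ℂ → ι → ℂ,
      (∀ j, Differentiable ℂ fun z => W z j) ∧
      W (t : ℂ) = w ∧
      (∀ z : ℂ, z.re = 0 → lpnormE Pb (W z) ≤ 1) ∧
      (∀ z : ℂ, z.re = 1 → lpnormE Pa (W z) ≤ 1) ∧
      ∃ C : ℝ, ∀ z : ℂ, 0 ≤ z.re → z.re ≤ 1 → ∀ j, ‖W z j‖ ≤ C := by
  classical
  by_cases hPtop : P = ⊤
  · refine ⟨fun _ => w, fun j => differentiable_const _, rfl, ?_, ?_,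
      lpnormE ⊤ w, fun z _ _ j => abs_le_lpnormE_top w j⟩
    · intro z _
      rw [(htop hPtop).2, ← hPtop]
      exact hw
    · intro z _
      rw [(htop hPtop).1, ← hPtop]
      exact hw
  · set α := (1/Pa).toReal with hα
    set β := (1/Pb).toReal with hβ
    set e := P.toReal with he
    have he0 : 0 < e := toReal_pos_of_ne_top hP hPtop
    have hα0 : 0 ≤ α := ENNReal.toReal_nonneg
    have hβ0 : 0 ≤ β := ENNReal.toReal_nonneg
    have heγ : e * (1/P).toReal = 1 := by
      rw [one_div, ENNReal.toReal_inv]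
      field_simp
      exact div_self he0.ne'
    set W : ℂ → ι → ℂ := fun z j => if w j = 0 then 0 else
      Complex.exp ((Real.log (‖w j‖) : ℂ) *
        ((((e*β : ℝ) : ℂ) + ((e*(α-β) : ℝ) : ℂ) * z) - 1)) * w j with hW
    have Wabs : ∀ (z : ℂ) (j : ι), w j ≠ 0 →
        ‖W z j‖ = ‖w j‖ ^ (e*β + e*(α-β)*z.re) := by
      intro z j h0
      have hx : 0 < ‖w j‖ := norm_pos_iff.mpr h0
      simp only [hW]
      simp only [if_neg h0, norm_mul, Complex.norm_exp]
      have hre : ((Real.log (‖w j‖) : ℂ) *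
          ((((e*β : ℝ) : ℂ) + ((e*(α-β) : ℝ) : ℂ) * z) - 1)).re
          = Real.log (‖w j‖) * ((e*β + e*(α-β)*z.re) - 1) := by
        rw [Complex.re_ofReal_mul]
        congr 1
        simp [Complex.add_re, Complex.sub_re, Complex.re_ofReal_mul]
      rw [hre, ← Real.rpow_def_of_pos hx]
      nth_rewrite 2 [← Real.rpow_one (‖w j‖)]
      rw [← Real.rpow_add hx]
      ring_nf
    refine ⟨W, ?_, ?_, ?_, ?_, ?_⟩
    · -- differentiability
      intro j
      simp only [hW]
      by_cases h0 : w j = 0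
      · simp only [if_pos h0]
        exact differentiable_const _
      · simp only [if_neg h0]
        apply Differentiable.mul _ (differentiable_const _)
        apply Differentiable.cexp
        apply Differentiable.mul (differentiable_const _)
        exact (Differentiable.add (differentiable_const _)
          ((differentiable_const _).mul differentiable_id)).sub (differentiable_const _)
    · -- value at t
      funext j
      simp only [hW]
      by_cases h0 : w j = 0
      · simp [if_pos h0, h0]
      · simp only [if_neg h0]
        have : ((((e*β : ℝ) : ℂ) + ((e*(α-β) : ℝ) : ℂ) * (t : ℂ)) - 1) = 0 := by
          have hr : e*β + e*(α-β)*t - 1 = 0 := by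
            have h5 : (1/P).toReal = t*α + (1-t)*β := hint
            nlinarith [heγ, h5]
          have hre : ((e*β : ℝ) : ℂ) + ((e*(α-β) : ℝ) : ℂ) * (t : ℂ) - 1
              = (((e*β + e*(α-β)*t - 1 : ℝ)) : ℂ) := by push_cast; ring
          rw [hre, hr, Complex.ofReal_zero]
        rw [this, mul_zero, Complex.exp_zero, one_mul]
    · -- boundary at Re z = 0
      intro z hz
      have habs : ∀ j, w j ≠ 0 → ‖W z j‖ = ‖w j‖ ^ (e*β) := by
        intro j h0
        rw [Wabs z j h0, hz]
        ring_nf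
      by_cases hPbtop : Pb = ⊤
      · subst hPbtop
        refine lpnormE_top_le zero_le_one fun j => ?_
        by_cases h0 : w j = 0
        · simp only [hW]; simp [if_pos h0]
        · rw [habs j h0]
          have hβ' : β = 0 := by rw [hβ]; simp
          rw [hβ', mul_zero, Real.rpow_zero]
      · have heb : 0 < Pb.toReal := toReal_pos_of_ne_top hPb hPbtop
        have hβeb : β * Pb.toReal = 1 := by
          rw [hβ, one_div, ENNReal.toReal_inv]
          field_simp
        rw [lpnormE_eq_sum hPbtop]
        have hsum : ∑ j, ‖W z j‖ ^ Pb.toReal = ∑ j, ‖w j‖ ^ e := by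
          apply Finset.sum_congr rfl
          intro j _
          by_cases h0 : w j = 0
          · have hz0 : W z j = 0 := by simp [hW, h0]
            rw [hz0, h0]
            simp only [map_zero, norm_zero]
            rw [Real.zero_rpow heb.ne', Real.zero_rpow he0.ne']
          · rw [habs j h0]
            rw [← Real.rpow_mul (norm_nonneg _)]
            congr 1
            calc e * β * Pb.toReal = e * (β * Pb.toReal) := by ring
              _ = e := by rw [hβeb, mul_one]
        rw [hsum, sum_rpow_eq hP hPtop]
        have h1 : lpnormE P w ^ e ≤ 1 := Real.rpow_le_one (lpnormE_nonneg _ _) hw he0.le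
        calc (lpnormE P w ^ e) ^ (1/Pb.toReal) ≤ 1 ^ (1/Pb.toReal) :=
              Real.rpow_le_rpow (Real.rpow_nonneg (lpnormE_nonneg _ _) _) h1 (by positivity)
          _ = 1 := Real.one_rpow _
    · -- boundary at Re z = 1
      intro z hz
      have habs : ∀ j, w j ≠ 0 → ‖W z j‖ = ‖w j‖ ^ (e*α) := by
        intro j h0
        rw [Wabs z j h0, hz]
        ring_nf
      by_cases hPatop : Pa = ⊤
      · subst hPatop
        refine lpnormE_top_le zero_le_one fun j => ?_
        by_cases h0 : w j = 0
        · simp only [hW]; simp [if_pos h0]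
        · rw [habs j h0]
          have hα' : α = 0 := by rw [hα]; simp
          rw [hα', mul_zero, Real.rpow_zero]
      · have hea : 0 < Pa.toReal := toReal_pos_of_ne_top hPa hPatop
        have hαea : α * Pa.toReal = 1 := by
          rw [hα, one_div, ENNReal.toReal_inv]
          field_simp
        rw [lpnormE_eq_sum hPatop]
        have hsum : ∑ j, ‖W z j‖ ^ Pa.toReal = ∑ j, ‖w j‖ ^ e := by
          apply Finset.sum_congr rfl
          intro j _
          by_cases h0 : w j = 0
          · have hz0 : W z j = 0 := by simp [hW, h0]
            rw [hz0, h0]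
            simp only [map_zero, norm_zero]
            rw [Real.zero_rpow hea.ne', Real.zero_rpow he0.ne']
          · rw [habs j h0]
            rw [← Real.rpow_mul (norm_nonneg _)]
            congr 1
            calc e * α * Pa.toReal = e * (α * Pa.toReal) := by ring
              _ = e := by rw [hαea, mul_one]
        rw [hsum, sum_rpow_eq hP hPtop]
        have h1 : lpnormE P w ^ e ≤ 1 := Real.rpow_le_one (lpnormE_nonneg _ _) hw he0.le
        calc (lpnormE P w ^ e) ^ (1/Pa.toReal) ≤ 1 ^ (1/Pa.toReal) :=
              Real.rpow_le_rpow (Real.rpow_nonneg (lpnormE_nonneg _ _) _) h1 (by positivity)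
          _ = 1 := Real.one_rpow _
    · -- uniform bound on the strip
      refine ⟨(∑ j, (‖w j‖ ^ (e*α) + ‖w j‖ ^ (e*β))) + 1,
        fun z hz0 hz1 j => ?_⟩
      have hCj : ∀ k, (0:ℝ) ≤ ‖w k‖ ^ (e*α) + ‖w k‖ ^ (e*β) :=
        fun k => add_nonneg (Real.rpow_nonneg (norm_nonneg _) _)
          (Real.rpow_nonneg (norm_nonneg _) _)
      have hkey : ‖W z j‖ ≤ ‖w j‖ ^ (e*α) + ‖w j‖ ^ (e*β) := by
        by_cases h0 : w j = 0
        · simp only [hW]; simp only [if_pos h0, map_zero, norm_zero]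
          exact hCj j
        · rw [Wabs z j h0]
          have hx : 0 < ‖w j‖ := norm_pos_iff.mpr h0
          set R := e*β + e*(α-β)*z.re with hR
          have hRlow : min (e*α) (e*β) ≤ R := by
            rcases le_total α β with hab | hab
            · have h6 : e*α ≤ R := by
                rw [hR]
                nlinarith [mul_nonneg (mul_nonneg he0.le (sub_nonneg.mpr hab)) (sub_nonneg.mpr hz1)]
              exact le_trans (min_le_left _ _) h6
            · have h6 : e*β ≤ R := by
                rw [hR]
                nlinarith [mul_nonneg (mul_nonneg he0.le (sub_nonneg.mpr hab)) hz0]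
              exact le_trans (min_le_right _ _) h6
          have hRhigh : R ≤ max (e*α) (e*β) := by
            rcases le_total α β with hab | hab
            · have h6 : R ≤ e*β := by
                rw [hR]
                nlinarith [mul_nonneg (mul_nonneg he0.le (sub_nonneg.mpr hab)) hz0]
              exact le_trans h6 (le_max_right _ _)
            · have h6 : R ≤ e*α := by
                rw [hR]
                nlinarith [mul_nonneg (mul_nonneg he0.le (sub_nonneg.mpr hab)) (sub_nonneg.mpr hz1)]
              exact le_trans h6 (le_max_left _ _)
          rcases le_total 1 (‖w j‖) with hx1 | hx1
          · have h2 : ‖w j‖ ^ R ≤ ‖w j‖ ^ (max (e*α) (e*β)) :=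
              Real.rpow_le_rpow_of_exponent_le hx1 hRhigh
            rcases max_choice (e*α) (e*β) with hm | hm <;> rw [hm] at h2
            · exact le_trans h2 (le_add_of_nonneg_right (Real.rpow_nonneg (norm_nonneg _) _))
            · exact le_trans h2 (le_add_of_nonneg_left (Real.rpow_nonneg (norm_nonneg _) _))
          · have h2 : ‖w j‖ ^ R ≤ ‖w j‖ ^ (min (e*α) (e*β)) :=
              Real.rpow_le_rpow_of_exponent_ge hx hx1 hRlow
            rcases min_choice (e*α) (e*β) with hm | hm <;> rw [hm] at h2
            · exact le_trans h2 (le_add_of_nonneg_right (Real.rpow_nonneg (norm_nonneg _) _))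
            · exact le_trans h2 (le_add_of_nonneg_left (Real.rpow_nonneg (norm_nonneg _) _))
      refine le_trans hkey (le_trans ?_ (le_add_of_nonneg_right zero_le_one))
      exact Finset.single_le_sum (fun k _ => hCj k) (mem_univ j)

end RTaux

namespace RTaux

lemma interp_facts {a b c : ℝ≥0∞} (ha : 1 ≤ a) (hb : 1 ≤ b) {t : ℝ} (ht0 : 0 < t) (ht1 : t < 1)
    (hc : 1/c = ENNReal.ofReal t / a + ENNReal.ofReal (1-t) / b) :
    1 ≤ c ∧ (1/c).toReal = t * (1/a).toReal + (1-t) * (1/b).toReal ∧ (c = ⊤ → a = ⊤ ∧ b = ⊤) := by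
  have ha0 : a ≠ 0 := (lt_of_lt_of_le zero_lt_one ha).ne'
  have hb0 : b ≠ 0 := (lt_of_lt_of_le zero_lt_one hb).ne'
  have h1 : ENNReal.ofReal t / a ≠ ⊤ := (ENNReal.div_lt_top ENNReal.ofReal_ne_top ha0).ne
  have h1' : ENNReal.ofReal (1-t) / b ≠ ⊤ := (ENNReal.div_lt_top ENNReal.ofReal_ne_top hb0).ne
  have hle : 1/c ≤ 1 := by
    rw [hc]
    calc ENNReal.ofReal t / a + ENNReal.ofReal (1-t)/b
        ≤ ENNReal.ofReal t / 1 + ENNReal.ofReal (1-t)/1 :=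
          add_le_add (ENNReal.div_le_div le_rfl ha) (ENNReal.div_le_div le_rfl hb)
      _ = ENNReal.ofReal t + ENNReal.ofReal (1-t) := by simp
      _ = 1 := by rw [← ENNReal.ofReal_add ht0.le (by linarith)]; norm_num
  refine ⟨?_, ?_, ?_⟩
  · rw [one_div, ENNReal.inv_le_one] at hle
    exact hle
  · rw [hc, ENNReal.toReal_add h1 h1', ENNReal.toReal_div, ENNReal.toReal_div,
      ENNReal.toReal_ofReal ht0.le, ENNReal.toReal_ofReal (by linarith : (0:ℝ) ≤ 1-t),
      one_div, one_div, ENNReal.toReal_inv, ENNReal.toReal_inv, div_eq_mul_inv, div_eq_mul_inv]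
  · intro hctop
    have h0 : (1:ℝ≥0∞)/c = 0 := by rw [hctop]; simp
    rw [hc, add_eq_zero] at h0
    obtain ⟨hA0, hB0⟩ := h0
    rw [ENNReal.div_eq_zero_iff] at hA0 hB0
    constructor
    · rcases hA0 with h | h
      · rw [ENNReal.ofReal_eq_zero] at h; linarith
      · exact h
    · rcases hB0 with h | h
      · rw [ENNReal.ofReal_eq_zero] at h; linarith
      · exact h

lemma toReal_one_div_le_one {a : ℝ≥0∞} (ha : 1 ≤ a) : (1/a).toReal ≤ 1 := by
  have h2 : 1/a ≤ 1 := by rw [one_div, ENNReal.inv_le_one]; exact ha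
  simpa using ENNReal.toReal_mono ENNReal.one_ne_top h2

lemma eq_one_of_toReal_one_div {a : ℝ≥0∞} (ha : 1 ≤ a) (h : (1/a).toReal = 1) : a = 1 := by
  rw [ENNReal.toReal_eq_one_iff, one_div, ENNReal.inv_eq_one] at h
  exact h

theorem riesz_thorin {m n : ℕ} (S : (Fin m → ℂ) →ₗ[ℂ] (Fin n → ℂ))
    {a₁ a₂ b₁ b₂ : ℝ≥0∞} (ha₁ : 1 ≤ a₁) (ha₂ : 1 ≤ a₂) (hb₁ : 1 ≤ b₁) (hb₂ : 1 ≤ b₂)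
    {A B : ℝ} (hA : 0 < A) (hB : 0 < B)
    (hSa : ∀ g, lpnormE a₂ (S g) ≤ A * lpnormE a₁ g)
    (hSb : ∀ g, lpnormE b₂ (S g) ≤ B * lpnormE b₁ g)
    {t : ℝ} (ht0 : 0 < t) (ht1 : t < 1)
    {c₁ c₂ : ℝ≥0∞}
    (hc₁ : 1/c₁ = ENNReal.ofReal t / a₁ + ENNReal.ofReal (1-t) / b₁)
    (hc₂ : 1/c₂ = ENNReal.ofReal t / a₂ + ENNReal.ofReal (1-t) / b₂)
    (g : Fin m → ℂ) :
    lpnormE c₂ (S g) ≤ A ^ t * B ^ (1 - t) * lpnormE c₁ g := by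
  classical
  obtain ⟨hc₁1, hγ₁, hc₁top⟩ := interp_facts ha₁ hb₁ ht0 ht1 hc₁
  obtain ⟨hc₂1, hγ₂, hc₂top⟩ := interp_facts ha₂ hb₂ ht0 ht1 hc₂
  have hABpos : 0 < A ^ t * B ^ (1 - t) :=
    mul_pos (Real.rpow_pos_of_pos hA t) (Real.rpow_pos_of_pos hB _)
  suffices key : ∀ u : Fin m → ℂ, lpnormE c₁ u ≤ 1 → lpnormE c₂ (S u) ≤ A ^ t * B ^ (1-t) by
    by_cases hg0 : g = 0
    · subst hg0
      rw [map_zero, lpnormE_zero hc₂1, lpnormE_zero hc₁1, mul_zero]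
    · have hL : 0 < lpnormE c₁ g := lpnormE_pos hc₁1 hg0
      have hu : lpnormE c₁ ((((lpnormE c₁ g)⁻¹ : ℝ) : ℂ) • g) ≤ 1 := by
        rw [lpnormE_smul hc₁1, Complex.norm_real, Real.norm_eq_abs, abs_of_pos (inv_pos.mpr hL),
          inv_mul_cancel₀ hL.ne']
      have h2 := key _ hu
      rw [map_smul, lpnormE_smul hc₂1, Complex.norm_real, Real.norm_eq_abs, abs_of_pos (inv_pos.mpr hL)] at h2
      have h3 := mul_le_mul_of_nonneg_left h2 hL.le
      rw [← mul_assoc, mul_inv_cancel₀ hL.ne', one_mul] at h3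
      calc lpnormE c₂ (S g) ≤ lpnormE c₁ g * (A ^ t * B ^ (1-t)) := h3
        _ = A ^ t * B ^ (1-t) * lpnormE c₁ g := by ring
  intro u hu
  by_cases hSu : S u = 0
  · rw [hSu, lpnormE_zero hc₂1]; exact hABpos.le
  obtain ⟨h, hh1, hh2⟩ := exists_dual hc₂1 (S u) hSu
  -- dual exponent arithmetic
  have hdt : ∀ P : ℝ≥0∞, 1 ≤ P → (1/dualExp P).toReal = 1 - (1/P).toReal := by
    intro P hP
    rw [one_div_dualExp, ENNReal.toReal_sub_of_le
      (by rw [one_div, ENNReal.inv_le_one]; exact hP) (by simp), ENNReal.toReal_one]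
  have hdint : (1/dualExp c₂).toReal
      = t * (1/dualExp a₂).toReal + (1-t) * (1/dualExp b₂).toReal := by
    rw [hdt _ hc₂1, hdt _ ha₂, hdt _ hb₂, hγ₂]; ring
  have hdtop : dualExp c₂ = ⊤ → dualExp a₂ = ⊤ ∧ dualExp b₂ = ⊤ := by
    intro hd
    rw [dualExp_eq_top_iff hc₂1] at hd
    have hγ2one : (1/c₂).toReal = 1 := by rw [hd]; simp
    have hα2le : (1/a₂).toReal ≤ 1 := toReal_one_div_le_one ha₂
    have hβ2le : (1/b₂).toReal ≤ 1 := toReal_one_div_le_one hb₂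
    have hα2 : (1/a₂).toReal = 1 := by nlinarith [hγ₂, hγ2one]
    have hβ2 : (1/b₂).toReal = 1 := by nlinarith [hγ₂, hγ2one]
    rw [dualExp_eq_top_iff ha₂, dualExp_eq_top_iff hb₂]
    exact ⟨eq_one_of_toReal_one_div ha₂ hα2, eq_one_of_toReal_one_div hb₂ hβ2⟩
  -- analytic families
  obtain ⟨W, hWdiff, hWt, hW0, hW1, CW, hCW⟩ :=
    exists_family u hc₁1 ha₁ hb₁ ht0 ht1 hγ₁ hc₁top hu
  obtain ⟨H, hHdiff, hHt, hH0, hH1, CH, hCH⟩ :=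
    exists_family h (one_le_dualExp c₂) (one_le_dualExp a₂) (one_le_dualExp b₂)
      ht0 ht1 hdint hdtop hh1
  set F : ℂ → ℂ := fun z => ∑ j, (S (W z)) j * H z j with hF
  -- expansion of S
  have hexp : ∀ (v : Fin m → ℂ) (j : Fin n),
      (S v) j = ∑ k, v k * (S fun i => if k = i then 1 else 0) j := by
    intro v j
    rw [LinearMap.pi_apply_eq_sum_univ S v]
    rw [Finset.sum_apply]
    simp [Pi.smul_apply, smul_eq_mul]
  have hFdiff : Differentiable ℂ F := by
    apply Differentiable.fun_sum
    intro j _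
    apply Differentiable.mul _ (hHdiff j)
    have : (fun z => (S (W z)) j)
        = fun z => ∑ k, W z k * (S fun i => if k = i then 1 else 0) j := by
      funext z; exact hexp (W z) j
    rw [this]
    apply Differentiable.fun_sum
    intro k _
    exact (hWdiff k).mul (differentiable_const _)
  -- uniform bound on strip
  have hFbdd : BddAbove ((norm ∘ F) '' (Complex.HadamardThreeLines.verticalClosedStrip 0 1)) := by
    set CW' := max CW 0 with hCW'
    set CH' := max CH 0 with hCH'
    refine ⟨∑ j, (∑ k, CW' * ‖(S fun i => if k = i then 1 else 0) j‖) * CH', ?_⟩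
    rintro x ⟨z, hz, rfl⟩
    have hz' : z.re ∈ Set.Icc (0:ℝ) 1 := hz
    simp only [Function.comp_apply]
    calc ‖F z‖ ≤ ∑ j, ‖(S (W z)) j * H z j‖ :=
          norm_sum_le _ _
      _ ≤ ∑ j, (∑ k, CW' * ‖(S fun i => if k = i then 1 else 0) j‖) * CH' := by
          apply Finset.sum_le_sum
          intro j _
          rw [norm_mul]
          apply mul_le_mul
          · rw [hexp (W z) j]
            calc ‖∑ k, W z k * (S fun i => if k = i then 1 else 0) j‖
                ≤ ∑ k, ‖W z k * (S fun i => if k = i then 1 else 0) j‖ :=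
                  norm_sum_le _ _
              _ ≤ ∑ k, CW' * ‖(S fun i => if k = i then 1 else 0) j‖ := by
                  apply Finset.sum_le_sum
                  intro k _
                  rw [norm_mul]
                  apply mul_le_mul_of_nonneg_right _ (norm_nonneg _)
                  exact le_trans (hCW z hz'.1 hz'.2 k) (le_max_left _ _)
          · exact le_trans (hCH z hz'.1 hz'.2 j) (le_max_left _ _)
          · exact norm_nonneg _
          · apply Finset.sum_nonneg
            intro k _
            exact mul_nonneg (le_max_right _ _) (norm_nonneg _)
  -- boundary bounds
  have hbd0 : ∀ z : ℂ, z.re = 0 → ‖F z‖ ≤ B := by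
    intro z hz
    calc ‖F z‖ ≤ ∑ j, ‖(S (W z)) j * H z j‖ := norm_sum_le _ _
      _ = ∑ j, ‖(S (W z)) j‖ * ‖H z j‖ := by
          apply Finset.sum_congr rfl; intro j _; rw [norm_mul]
      _ ≤ lpnormE b₂ (S (W z)) * lpnormE (dualExp b₂) (H z) :=
          holder hb₂ (one_le_dualExp b₂) (inv_add_inv_dualExp hb₂) _ _
      _ ≤ (B * lpnormE b₁ (W z)) * 1 := by
          apply mul_le_mul (hSb (W z)) (hH0 z hz) (lpnormE_nonneg _ _)
          exact mul_nonneg hB.le (lpnormE_nonneg _ _)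
      _ ≤ (B * 1) * 1 := by
          apply mul_le_mul_of_nonneg_right _ zero_le_one
          exact mul_le_mul_of_nonneg_left (hW0 z hz) hB.le
      _ = B := by ring
  have hbd1 : ∀ z : ℂ, z.re = 1 → ‖F z‖ ≤ A := by
    intro z hz
    calc ‖F z‖ ≤ ∑ j, ‖(S (W z)) j * H z j‖ := norm_sum_le _ _
      _ = ∑ j, ‖(S (W z)) j‖ * ‖H z j‖ := by
          apply Finset.sum_congr rfl; intro j _; rw [norm_mul]
      _ ≤ lpnormE a₂ (S (W z)) * lpnormE (dualExp a₂) (H z) :=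
          holder ha₂ (one_le_dualExp a₂) (inv_add_inv_dualExp ha₂) _ _
      _ ≤ (A * lpnormE a₁ (W z)) * 1 := by
          apply mul_le_mul (hSa (W z)) (hH1 z hz) (lpnormE_nonneg _ _)
          exact mul_nonneg hA.le (lpnormE_nonneg _ _)
      _ ≤ (A * 1) * 1 := by
          apply mul_le_mul_of_nonneg_right _ zero_le_one
          exact mul_le_mul_of_nonneg_left (hW1 z hz) hA.le
      _ = A := by ring
  -- three lines
  have hmem : (t : ℂ) ∈ Complex.HadamardThreeLines.verticalClosedStrip 0 1 := by
    simp [Complex.HadamardThreeLines.verticalClosedStrip, Complex.ofReal_re]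
    exact ⟨ht0.le, ht1.le⟩
  have h3l := Complex.HadamardThreeLines.norm_le_interp_of_mem_verticalClosedStrip₀₁' F hmem
    (hFdiff.diffContOnCl) hFbdd
    (fun z hz => by exact hbd0 z hz)
    (fun z hz => by exact hbd1 z hz)
  have hFt : F (t : ℂ) = ((lpnormE c₂ (S u) : ℝ) : ℂ) := by
    rw [hF]
    simp only [hWt, hHt]
    exact hh2
  rw [hFt, Complex.norm_real, Real.norm_eq_abs, abs_of_nonneg (lpnormE_nonneg _ _), Complex.ofReal_re] at h3l
  calc lpnormE c₂ (S u) ≤ B ^ (1 - t) * A ^ t := h3l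
    _ = A ^ t * B ^ (1 - t) := by ring

end RTaux

open RTaux in
/-- Reverse (converse) form of the Riesz–Thorin interpolation theorem. -/
theorem stmt19 {N M : ℕ} (T : (Fin N → ℂ) →ₗ[ℂ] (Fin M → ℂ))
    (hT : Function.Bijective T)
    (p₁ p₂ q₁ q₂ : ℝ≥0∞) (hp₁ : 1 ≤ p₁) (hp₂ : 1 ≤ p₂) (hq₁ : 1 ≤ q₁) (hq₂ : 1 ≤ q₂)
    (Mp Mq : ℝ) (hMp : 0 < Mp) (hMq : 0 < Mq)
    (hbp : ∀ f : Fin N → ℂ, Mp * lpnormE p₁ f ≤ lpnormE p₂ (T f))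
    (hbq : ∀ f : Fin N → ℂ, Mq * lpnormE q₁ f ≤ lpnormE q₂ (T f))
    (t : ℝ) (ht0 : 0 ≤ t) (ht1 : t ≤ 1)
    (r₁ r₂ : ℝ≥0∞)
    (hr₁ : 1 / r₁ = ENNReal.ofReal t / p₁ + ENNReal.ofReal (1 - t) / q₁)
    (hr₂ : 1 / r₂ = ENNReal.ofReal t / p₂ + ENNReal.ofReal (1 - t) / q₂)
    (f : Fin N → ℂ) :
    Mp ^ t * Mq ^ (1 - t) * lpnormE r₁ f ≤ lpnormE r₂ (T f) := by
  rcases eq_or_lt_of_le ht0 with h0 | h0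
  · -- t = 0
    subst h0
    have hr₁' : r₁ = q₁ := by
      rw [ENNReal.ofReal_zero, ENNReal.zero_div, zero_add, sub_zero, ENNReal.ofReal_one] at hr₁
      have := congrArg (·⁻¹) hr₁
      simpa [one_div, inv_inv] using this
    have hr₂' : r₂ = q₂ := by
      rw [ENNReal.ofReal_zero, ENNReal.zero_div, zero_add, sub_zero, ENNReal.ofReal_one] at hr₂
      have := congrArg (·⁻¹) hr₂
      simpa [one_div, inv_inv] using this
    subst hr₁' hr₂'
    rw [Real.rpow_zero, sub_zero, Real.rpow_one, one_mul]
    exact hbq f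
  · rcases eq_or_lt_of_le ht1 with h1 | h1
    · -- t = 1
      subst h1
      have hr₁' : r₁ = p₁ := by
        rw [sub_self, ENNReal.ofReal_zero, ENNReal.zero_div, add_zero, ENNReal.ofReal_one] at hr₁
        have := congrArg (·⁻¹) hr₁
        simpa [one_div, inv_inv] using this
      have hr₂' : r₂ = p₂ := by
        rw [sub_self, ENNReal.ofReal_zero, ENNReal.zero_div, add_zero, ENNReal.ofReal_one] at hr₂
        have := congrArg (·⁻¹) hr₂
        simpa [one_div, inv_inv] using this
      subst hr₁' hr₂'
      rw [Real.rpow_one, sub_self, Real.rpow_zero, mul_one]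
      exact hbp f
    · -- 0 < t < 1
      set e := LinearEquiv.ofBijective T hT with he
      set S : (Fin M → ℂ) →ₗ[ℂ] (Fin N → ℂ) := (e.symm : (Fin M → ℂ) ≃ₗ[ℂ] (Fin N → ℂ)).toLinearMap with hS
      have hTS : ∀ g : Fin M → ℂ, T (S g) = g := by
        intro g
        have : T (e.symm g) = e (e.symm g) := rfl
        rw [hS]
        simp only [LinearEquiv.coe_coe]
        rw [this, e.apply_symm_apply]
      have hST : S (T f) = f := by
        have : S (T f) = e.symm (e f) := rfl
        rw [this, e.symm_apply_apply]
      have hSa : ∀ g : Fin M → ℂ, lpnormE p₁ (S g) ≤ Mp⁻¹ * lpnormE p₂ g := by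
        intro g
        have h2 := hbp (S g)
        rw [hTS g] at h2
        rw [inv_mul_eq_div, le_div_iff₀ hMp]
        linarith [h2]
      have hSb : ∀ g : Fin M → ℂ, lpnormE q₁ (S g) ≤ Mq⁻¹ * lpnormE q₂ g := by
        intro g
        have h2 := hbq (S g)
        rw [hTS g] at h2
        rw [inv_mul_eq_div, le_div_iff₀ hMq]
        linarith [h2]
      have hRT := riesz_thorin S hp₂ hp₁ hq₂ hq₁ (inv_pos.mpr hMp) (inv_pos.mpr hMq)
        hSa hSb h0 h1 hr₂ hr₁ (T f)
      rw [hST] at hRT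
      rw [Real.inv_rpow hMp.le, Real.inv_rpow hMq.le, ← mul_inv] at hRT
      have hK : 0 < Mp ^ t * Mq ^ (1 - t) :=
        mul_pos (Real.rpow_pos_of_pos hMp t) (Real.rpow_pos_of_pos hMq _)
      rw [inv_mul_eq_div, le_div_iff₀ hK] at hRT
      linarith [hRT]
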